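/- arXiv:1306.5495 — 2 statements merged into one kernel-verified Lean document; each statement's English description precedes it below -/
import Mathlib

section
/- Let R be a commutative semilocal ring, A a connected commutative algebraic ring over an algebraically closed field K, and f: R → A an abstract ring homomorphism with Zariski-dense image. Then the image f(R^×) of the units of R is Zariski-dense in A. -/
open MvPolynomial

/-- A map `𝔸ⁿ → 𝔸ᵐ` is a polynomial (regular) map if each coordinate is given by a
polynomial. -/
def IsPolyMap {K : Type*} [Field K] {n m : ℕ} (f : (Fin n → K) → (Fin m → K)) : Prop :=
  ∀ j : Fin m, ∃ p : MvPolynomial (Fin n) K, ∀ x, f x j = eval x p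

/-- A two-variable polynomial (regular) map `𝔸ⁿ × 𝔸ⁿ → 𝔸ᵐ`. -/
def IsPolyMap₂ {K : Type*} [Field K] {n m : ℕ}
    (f : (Fin n → K) → (Fin n → K) → (Fin m → K)) : Prop :=
  ∀ j : Fin m, ∃ p : MvPolynomial (Fin n ⊕ Fin n) K,
    ∀ x y, f x y j = eval (Sum.elim x y) p

/-- An (affine) algebraic subset of `𝔸ⁿ`: the common zero locus of a family of
polynomials. -/
def IsAlgebraicSet {K : Type*} [Field K] {n : ℕ} (S : Set (Fin n → K)) : Prop :=
  ∃ E : Set (MvPolynomial (Fin n) K), S = {x | ∀ p ∈ E, eval x p = 0}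

/-- The Zariski topology on affine `n`-space over `K`. -/
def zariskiTop (K : Type*) [Field K] (n : ℕ) : TopologicalSpace (Fin n → K) :=
  TopologicalSpace.generateFrom
    {U | ∃ p : MvPolynomial (Fin n) K, U = {x | eval x p ≠ 0}}

/-- A map defined on a subset `S ⊆ 𝔸ⁿ` is regular on `S` if at each point of `S` it is
locally a ratio of polynomials. -/
def IsRegularOn {K : Type*} [Field K] {n m : ℕ} (S : Set (Fin n → K))
    (f : (Fin n → K) → (Fin m → K)) : Prop :=
  ∀ x ∈ S, ∀ j : Fin m, ∃ p q : MvPolynomial (Fin n) K,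
    eval x q ≠ 0 ∧ ∀ y ∈ S, eval y q ≠ 0 → eval y q * f y j = eval y p

/-- An algebraic ring over `K`: an affine algebraic set together with regular
(polynomial) addition, negation, and multiplication maps making it an associative
unital ring. -/
structure AlgebraicRing (K : Type*) [Field K] where
  n : ℕ
  carrier : Set (Fin n → K)
  carrier_closed : IsAlgebraicSet carrier
  add : (Fin n → K) → (Fin n → K) → (Fin n → K)
  mul : (Fin n → K) → (Fin n → K) → (Fin n → K)
  neg : (Fin n → K) → (Fin n → K)
  zero : Fin n → K
  one : Fin n → K
  add_poly : IsPolyMap₂ add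
  mul_poly : IsPolyMap₂ mul
  neg_poly : IsPolyMap neg
  zero_mem : zero ∈ carrier
  one_mem : one ∈ carrier
  add_mem : ∀ ⦃x y⦄, x ∈ carrier → y ∈ carrier → add x y ∈ carrier
  mul_mem : ∀ ⦃x y⦄, x ∈ carrier → y ∈ carrier → mul x y ∈ carrier
  neg_mem : ∀ ⦃x⦄, x ∈ carrier → neg x ∈ carrier
  add_assoc' : ∀ x ∈ carrier, ∀ y ∈ carrier, ∀ z ∈ carrier,
    add (add x y) z = add x (add y z)
  add_comm' : ∀ x ∈ carrier, ∀ y ∈ carrier, add x y = add y x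
  zero_add' : ∀ x ∈ carrier, add zero x = x
  add_zero' : ∀ x ∈ carrier, add x zero = x
  neg_add_cancel' : ∀ x ∈ carrier, add (neg x) x = zero
  mul_assoc' : ∀ x ∈ carrier, ∀ y ∈ carrier, ∀ z ∈ carrier,
    mul (mul x y) z = mul x (mul y z)
  one_mul' : ∀ x ∈ carrier, mul one x = x
  mul_one' : ∀ x ∈ carrier, mul x one = x
  zero_mul' : ∀ x ∈ carrier, mul zero x = zero
  mul_zero' : ∀ x ∈ carrier, mul x zero = zero
  left_distrib' : ∀ x ∈ carrier, ∀ y ∈ carrier, ∀ z ∈ carrier,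
    mul x (add y z) = add (mul x y) (mul x z)
  right_distrib' : ∀ x ∈ carrier, ∀ y ∈ carrier, ∀ z ∈ carrier,
    mul (add x y) z = add (mul x z) (mul y z)

namespace AlgebraicRing

variable {K : Type*} [Field K]

/-- The Zariski topology on (the points of) an algebraic ring. -/
instance (A : AlgebraicRing K) : TopologicalSpace A.carrier :=
  TopologicalSpace.induced Subtype.val (zariskiTop K A.n)

/-- The set of (two-sided) units of an algebraic ring. -/
def units (A : AlgebraicRing K) : Set (Fin A.n → K) :=
  {x | x ∈ A.carrier ∧ ∃ y ∈ A.carrier, A.mul x y = A.one ∧ A.mul y x = A.one}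

end AlgebraicRing

namespace AlgebraicRing

variable {K : Type*} [Field K] (A : AlgebraicRing K)

instance : Add A.carrier := ⟨fun x y => ⟨A.add x.1 y.1, A.add_mem x.2 y.2⟩⟩
instance : Mul A.carrier := ⟨fun x y => ⟨A.mul x.1 y.1, A.mul_mem x.2 y.2⟩⟩
instance : Neg A.carrier := ⟨fun x => ⟨A.neg x.1, A.neg_mem x.2⟩⟩
instance : Zero A.carrier := ⟨⟨A.zero, A.zero_mem⟩⟩
instance : One A.carrier := ⟨⟨A.one, A.one_mem⟩⟩

/-- The points of an algebraic ring form an (abstract) ring. -/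
instance : Ring A.carrier where
  add_assoc x y z := Subtype.ext (A.add_assoc' x.1 x.2 y.1 y.2 z.1 z.2)
  zero_add x := Subtype.ext (A.zero_add' x.1 x.2)
  add_zero x := Subtype.ext (A.add_zero' x.1 x.2)
  nsmul := nsmulRec
  zsmul := zsmulRec
  neg_add_cancel x := Subtype.ext (A.neg_add_cancel' x.1 x.2)
  add_comm x y := Subtype.ext (A.add_comm' x.1 x.2 y.1 y.2)
  mul_assoc x y z := Subtype.ext (A.mul_assoc' x.1 x.2 y.1 y.2 z.1 z.2)
  one_mul x := Subtype.ext (A.one_mul' x.1 x.2)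
  mul_one x := Subtype.ext (A.mul_one' x.1 x.2)
  zero_mul x := Subtype.ext (A.zero_mul' x.1 x.2)
  mul_zero x := Subtype.ext (A.mul_zero' x.1 x.2)
  left_distrib x y z := Subtype.ext (A.left_distrib' x.1 x.2 y.1 y.2 z.1 z.2)
  right_distrib x y z := Subtype.ext (A.right_distrib' x.1 x.2 y.1 y.2 z.1 z.2)

end AlgebraicRing

/-- A commutative algebraic ring over `K`. -/
structure CommAlgebraicRing (K : Type*) [Field K] extends AlgebraicRing K where
  mul_comm' : ∀ x ∈ carrier, ∀ y ∈ carrier, mul x y = mul y x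

namespace CommAlgebraicRing

variable {K : Type*} [Field K] (A : CommAlgebraicRing K)

/-- The points of a commutative algebraic ring form an (abstract) commutative ring. -/
instance : CommRing A.carrier where
  mul_comm x y := Subtype.ext (A.mul_comm' x.1 x.2 y.1 y.2)

end CommAlgebraicRing

/-!
Let `U N` be the set of elements of `R` lying in none of the maximal ideals in `N`; when `N`
contains every maximal ideal, `U N = Rˣ`. Enlarging `N` by a maximal ideal `I` keeps `f (U N)`
dense: `U N` is the union of `U N ∩ I` and `U N \ I`, so by irreducibility of `A` one of their
images is dense, and in the first case translating by `f e` with `e ∈ ⋂ N \ I` moves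
`f (U N ∩ I)` into `f (U N \ I)`. Translations are Zariski homeomorphisms since addition is
polynomial.
-/

open Set Topology Pointwise

theorem dense_union_iff {X : Type*} [TopologicalSpace X] [PreirreducibleSpace X] {s t : Set X} :
    Dense (s ∪ t) ↔ Dense s ∨ Dense t := by
  refine ⟨fun h => ?_, fun h => h.elim (·.mono subset_union_left) (·.mono subset_union_right)⟩
  have hcover : univ ⊆ closure s ∪ closure t := by
    rw [← closure_union, h.closure_eq]
  simpa only [univ_subset_iff, ← dense_iff_closure_eq] using
    isPreirreducible_iff_isClosed_union_isClosed.1 PreirreducibleSpace.isPreirreducible_univ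
      _ _ isClosed_closure isClosed_closure hcover

theorem dense_image_diff_of_add_mem {G X : Type*} [AddGroup G] [AddGroup X]
    [TopologicalSpace X] [ContinuousConstVAdd X X] [PreirreducibleSpace X] (f : G →+ X)
    {S : Set G} (H : AddSubgroup G) {e : G} (he : e ∉ H) (hS : ∀ s ∈ S, s ∈ H → e + s ∈ S)
    (hSd : Dense (f '' S)) : Dense (f '' (S \ H)) := by
  rw [← inter_union_sdiff S H, image_union, dense_union_iff] at hSd
  rcases hSd with hIn | hDiff
  · refine (hIn.vadd (f e)).mono ?_
    rintro _ ⟨_, ⟨s, ⟨hs, hsH⟩, rfl⟩, rfl⟩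
    exact ⟨e + s, ⟨hS s hs hsH, fun h => he ((H.add_mem_cancel_right hsH).1 h)⟩, map_add f e s⟩
  · exact hDiff

theorem Ideal.finset_inf_not_le_of_isMaximal {R : Type*} [CommRing R] {N : Finset (Ideal R)}
    (hN : ∀ J ∈ N, J.IsMaximal) {I : Ideal R} (hI : I.IsPrime) (hIN : I ∉ N) :
    ¬N.inf id ≤ I := by
  rw [hI.inf_le']
  rintro ⟨J, hJ, hJI⟩
  exact hIN ((hN J hJ).eq_of_le hI.ne_top hJI ▸ hJ)

theorem dense_image_setOf_forall_notMem {R X : Type*} [CommRing R] [AddGroup X]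
    [TopologicalSpace X] [ContinuousConstVAdd X X] [PreirreducibleSpace X] (f : R →+ X)
    (hf : DenseRange f) {N : Finset (Ideal R)} (hN : ∀ J ∈ N, J.IsMaximal) :
    Dense (f '' {r | ∀ J ∈ N, r ∉ J}) := by
  induction N using Finset.induction_on with
  | empty => simpa [DenseRange] using hf
  | insert I N hIN ih =>
    have hNmax : ∀ J ∈ N, J.IsMaximal := fun J hJ => hN J (Finset.mem_insert_of_mem hJ)
    obtain ⟨e, heN, heI⟩ := SetLike.not_le_iff_exists.1 <|
      Ideal.finset_inf_not_le_of_isMaximal hNmax (hN I (Finset.mem_insert_self I N)).isPrime hIN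
    have hS : ∀ s ∈ {r | ∀ J ∈ N, r ∉ J}, s ∈ I.toAddSubgroup → e + s ∈ {r | ∀ J ∈ N, r ∉ J} :=
      fun s hs _ J hJ => by
        rw [J.add_mem_iff_right ((Finset.inf_le (f := id) hJ) heN)]
        exact hs J hJ
    convert dense_image_diff_of_add_mem f I.toAddSubgroup heI hS (ih hNmax) using 2
    ext r
    simp [or_imp, forall_and, and_comm]

section Zariski

variable {K : Type*} [Field K]

theorem MvPolynomial.eval_bind₁ {σ τ : Type*} (x : τ → K) (g : σ → MvPolynomial τ K)
    (φ : MvPolynomial σ K) : eval x (bind₁ g φ) = eval (fun i => eval x (g i)) φ :=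
  eval₂Hom_bind₁ _ _ _ _

theorem IsPolyMap.continuous {n m : ℕ} {φ : (Fin n → K) → (Fin m → K)} (h : IsPolyMap φ) :
    Continuous[zariskiTop K n, zariskiTop K m] φ := by
  choose p hp using h
  refine continuous_generateFrom_iff.2 ?_
  rintro _ ⟨q, rfl⟩
  refine TopologicalSpace.isOpen_generateFrom_of_mem ⟨bind₁ p q, ?_⟩
  ext x
  have hφx : φ x = fun j => eval x (p j) := funext fun j => hp j x
  simp only [mem_preimage, mem_ofPred_eq, hφx, eval_bind₁]

theorem IsPolyMap₂.isPolyMap_apply {n m : ℕ} {g : (Fin n → K) → (Fin n → K) → (Fin m → K)}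
    (h : IsPolyMap₂ g) (a : Fin n → K) : IsPolyMap (g a) := by
  intro j
  obtain ⟨p, hp⟩ := h j
  refine ⟨bind₁ (Sum.elim (fun i => C (a i)) X) p, fun x => ?_⟩
  rw [hp, eval_bind₁]
  congr 2 with i
  cases i <;> simp

instance AlgebraicRing.continuousConstVAdd (A : AlgebraicRing K) :
    ContinuousConstVAdd A.carrier A.carrier where
  continuous_const_vadd a := by
    let := zariskiTop K A.n
    exact continuous_induced_rng.2 <|
      (A.add_poly.isPolyMap_apply a.1).continuous.comp continuous_induced_dom

end Zariski

theorem dense_image_of_units_of_semilocal_general (K : Type*) [Field K]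
    (R : Type*) [CommRing R] (hsemilocal : {I : Ideal R | I.IsMaximal}.Finite)
    (A : CommAlgebraicRing K)
    (hconn : @IsIrreducible _ (zariskiTop K A.n) A.toAlgebraicRing.carrier)
    (f : R →+* A.carrier) (hdense : DenseRange ⇑f) :
    Dense (Set.range fun u : Rˣ => f (u : R)) := by
  have : PreirreducibleSpace A.carrier :=
    @Subtype.preirreducibleSpace _ (zariskiTop K A.n) _ hconn.2
  have hM := dense_image_setOf_forall_notMem f.toAddMonoidHom hdense
    (N := hsemilocal.toFinset) fun J hJ => hsemilocal.mem_toFinset.1 hJ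
  refine hM.mono ?_
  rintro _ ⟨r, hr, rfl⟩
  by_contra hu
  obtain ⟨I, hI, hrI⟩ := exists_max_ideal_of_mem_nonunits fun h : IsUnit r => hu ⟨h.unit, rfl⟩
  exact hr I (hsemilocal.mem_toFinset.2 hI) hrI

/-- If `R` is a commutative semilocal ring, `A` a connected commutative
algebraic ring over an algebraically closed field `K`, and `f : R → A` an abstract ring
homomorphism with Zariski-dense image, then `f(R^×)` is Zariski-dense in `A`. -/
theorem dense_image_of_units_of_semilocal (K : Type*) [Field K] [IsAlgClosed K]
    (R : Type*) [CommRing R] (hsemilocal : {I : Ideal R | I.IsMaximal}.Finite)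
    (A : CommAlgebraicRing K)
    (hconn : @IsIrreducible _ (zariskiTop K A.n) A.toAlgebraicRing.carrier)
    (f : R →+* A.carrier) (hdense : DenseRange ⇑f) :
    Dense (Set.range fun u : Rˣ => f (u : R)) :=
  dense_image_of_units_of_semilocal_general K R hsemilocal A hconn f hdense
end

section
/- Let K be an algebraically closed field of characteristic 0, n ≥ 1 an integer, B = K[ω] with ω^{n+1} = 0, and a ∈ K. The map f: ℤ[X] → B defined by g(X) ↦ Σ_{k=0}^{n} (g^{(k)}(a)/k!) ω^k is a ring homomorphism with Zariski-dense image in B (viewed as affine (n+1)-space over K). -/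
open MvPolynomial

/-- The `k`-th Taylor coefficient at `a` of an integer polynomial:
`g ↦ g⁽ᵏ⁾(a)/k!`. -/
noncomputable def taylorCoeff (K : Type*) [Field K] (a : K) (g : Polynomial ℤ) (k : ℕ) :
    K :=
  (Nat.factorial k : K)⁻¹ *
    Polynomial.aeval a ((fun q : Polynomial ℤ => Polynomial.derivative q)^[k] g)

/-
The Taylor coefficients at `a` are the coefficients of `g(X + a)`, so the ring
homomorphism property is `(gh)(X + a) = g(X + a) h(X + a)`. For density, a polynomial `p`
vanishing on the image vanishes on `T(ℤⁿ⁺¹)`, where `T` is the linear automorphism of `Kⁿ⁺¹`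
sending the coefficients of a polynomial of degree `≤ n` to its Taylor coefficients at `a`.
Then `p ∘ T` is a polynomial vanishing on `ℤⁿ⁺¹`, which is Zariski dense in characteristic `0`;
so `p ∘ T = 0`, and `p = 0` on `Kⁿ⁺¹` since `T` is onto.
-/

lemma taylorCoeff_eq_coeff_taylor {K : Type*} [Field K] [CharZero K] (a : K)
    (g : Polynomial ℤ) (k : ℕ) :
    taylorCoeff K a g k = (Polynomial.taylor a (g.map (Int.castRingHom K))).coeff k := by
  rw [taylorCoeff, Polynomial.taylor_coeff, Polynomial.aeval_def, Polynomial.eval₂_eq_eval_map,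
    ← Polynomial.iterate_derivative_map, ← Polynomial.factorial_smul_hasseDeriv,
    LinearMap.smul_apply, Polynomial.eval_smul, nsmul_eq_mul,
    inv_mul_cancel_left₀ (Nat.cast_ne_zero.2 k.factorial_ne_zero)]
  rfl

section TaylorCoeff

variable {K : Type*} [Field K] [CharZero K] (a : K)

lemma taylorCoeff_one (k : ℕ) : taylorCoeff K a 1 k = if k = 0 then 1 else 0 := by
  simp [taylorCoeff_eq_coeff_taylor, Polynomial.coeff_one]

lemma taylorCoeff_add (g h : Polynomial ℤ) (k : ℕ) :
    taylorCoeff K a (g + h) k = taylorCoeff K a g k + taylorCoeff K a h k := by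
  simp only [taylorCoeff_eq_coeff_taylor, Polynomial.map_add, map_add, Polynomial.coeff_add]

lemma taylorCoeff_mul (g h : Polynomial ℤ) (k : ℕ) :
    taylorCoeff K a (g * h) k =
      ∑ ij ∈ Finset.HasAntidiagonal.antidiagonal k,
        taylorCoeff K a g ij.1 * taylorCoeff K a h ij.2 := by
  simp only [taylorCoeff_eq_coeff_taylor, Polynomial.map_mul, Polynomial.taylor_mul,
    Polynomial.coeff_mul]

end TaylorCoeff

section ZariskiTop

variable {K : Type*} [Field K] {m : ℕ}

lemma isTopologicalBasis_zariskiTop :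
    @TopologicalSpace.IsTopologicalBasis _ (zariskiTop K m)
      {U | ∃ p : MvPolynomial (Fin m) K, U = {x | eval x p ≠ 0}} := by
  have hbasis := @TopologicalSpace.isTopologicalBasis_of_subbasis_of_inter _ (zariskiTop K m)
    {U | ∃ p : MvPolynomial (Fin m) K, U = {x | eval x p ≠ 0}} rfl (by
      rintro _ ⟨p, rfl⟩ _ ⟨q, rfl⟩
      exact ⟨p * q, by ext x; simp [not_or]⟩)
  rwa [Set.insert_eq_of_mem] at hbasis
  exact ⟨1, by simp⟩

lemma dense_zariskiTop_of_forall_eval_eq_zero {S : Set (Fin m → K)}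
    (hS : ∀ p : MvPolynomial (Fin m) K, (∀ x ∈ S, eval x p = 0) → ∀ x, eval x p = 0) :
    @Dense _ (zariskiTop K m) S := by
  let _ := zariskiTop K m
  rw [isTopologicalBasis_zariskiTop.dense_iff]
  rintro _ ⟨p, rfl⟩ ⟨x, hx⟩
  by_contra hdisj
  exact hx (hS p (fun y hy => by_contra fun hpy => hdisj ⟨y, hpy, hy⟩) x)

end ZariskiTop

namespace MvPolynomial

lemma exists_eval_eq_eval_linearMap {R : Type*} [CommSemiring R] {ι κ : Type*} [Fintype ι]
    (L : (ι → R) →ₗ[R] κ → R) (p : MvPolynomial κ R) :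
    ∃ q : MvPolynomial ι R, ∀ x, eval x q = eval (L x) p := by
  classical
  refine ⟨bind₁ (fun k => ∑ i, C (L (fun j => if i = j then 1 else 0) k) * X i) p, fun x => ?_⟩
  rw [eval, eval₂Hom_bind₁]
  refine congrArg (fun y => eval y p) (_root_.funext fun k => ?_)
  simp [LinearMap.pi_apply_eq_sum_univ L x, mul_comm]

lemma eq_zero_of_eval_intCast_eq_zero {R : Type*} [CommRing R] [IsDomain R] [CharZero R]
    {σ : Type*} {p : MvPolynomial σ R} (hp : ∀ b : σ → ℤ, eval (fun i => (b i : R)) p = 0) :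
    p = 0 := by
  refine funext_set (fun _ => Set.range ((↑) : ℤ → R))
    (fun _ => Set.infinite_range_of_injective Int.cast_injective) fun x hx => ?_
  choose b hb using fun i => hx i trivial
  simpa [← _root_.funext hb] using hp b

end MvPolynomial

section TruncatedTaylor

open Polynomial

variable {R : Type*} [CommRing R] [DecidableEq R]

noncomputable def truncTaylor (a : R) (m : ℕ) : (Fin m → R) →ₗ[R] Fin m → R :=
  toFn m ∘ₗ taylor a ∘ₗ ofFn m

lemma truncTaylor_surjective (a : R) (m : ℕ) : Function.Surjective (truncTaylor a m) := by
  rcases m with _ | n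
  · exact fun x => ⟨x, Subsingleton.elim _ _⟩
  intro x
  have hdeg : (taylor (-a) (ofFn (n + 1) x)).natDegree < n + 1 := by
    rw [natDegree_taylor]
    exact ofFn_natDegree_lt n.succ_pos x
  refine ⟨toFn (n + 1) (taylor (-a) (ofFn (n + 1) x)), ?_⟩
  simp only [truncTaylor, LinearMap.comp_apply, ofFn_comp_toFn_eq_id_of_natDegree_lt hdeg,
    taylor_taylor, add_neg_cancel, taylor_zero, toFn_comp_ofFn_eq_id]

lemma map_ofFn {S : Type*} [Semiring S] [DecidableEq S] (f : R →+* S) {m : ℕ} (b : Fin m → R) :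
    (ofFn m b).map f = ofFn m (fun i => f (b i)) := by
  ext i
  rcases lt_or_ge i m with hi | hi <;> simp [hi]

end TruncatedTaylor

lemma truncTaylor_intCast {K : Type*} [Field K] [CharZero K] [DecidableEq K] (a : K) {m : ℕ}
    (b : Fin m → ℤ) :
    truncTaylor a m (fun i => (b i : K)) =
      fun k : Fin m => taylorCoeff K a (Polynomial.ofFn m b) k := by
  ext k
  simp [truncTaylor, Polynomial.toFn, taylorCoeff_eq_coeff_taylor, map_ofFn]

lemma dense_range_truncTaylor_intCast {K : Type*} [Field K] [CharZero K] [DecidableEq K]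
    (a : K) (m : ℕ) :
    @Dense _ (zariskiTop K m)
      (Set.range fun b : Fin m → ℤ => truncTaylor a m (fun i => (b i : K))) := by
  refine dense_zariskiTop_of_forall_eval_eq_zero fun p hp x => ?_
  obtain ⟨q, hq⟩ := exists_eval_eq_eval_linearMap (truncTaylor a m) p
  have hq0 : q = 0 := eq_zero_of_eval_intCast_eq_zero fun b => (hq _).trans (hp _ ⟨b, rfl⟩)
  obtain ⟨y, rfl⟩ := truncTaylor_surjective a m x
  rw [← hq, hq0, map_zero]

theorem truncated_taylor_ringHom_dense_general (K : Type*) [Field K] [CharZero K]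
    (n : ℕ) (a : K) :
    (∀ k : ℕ, taylorCoeff K a 1 k = if k = 0 then 1 else 0) ∧
    (∀ g h : Polynomial ℤ, ∀ k : ℕ,
      taylorCoeff K a (g + h) k = taylorCoeff K a g k + taylorCoeff K a h k) ∧
    (∀ g h : Polynomial ℤ, ∀ k : ℕ, k ≤ n →
      taylorCoeff K a (g * h) k =
        ∑ ij ∈ Finset.HasAntidiagonal.antidiagonal k, taylorCoeff K a g ij.1 * taylorCoeff K a h ij.2) ∧
    @Dense _ (zariskiTop K (n + 1))
      (Set.range fun g : Polynomial ℤ => fun k : Fin (n + 1) => taylorCoeff K a g k) := by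
  classical
  let _ := zariskiTop K (n + 1)
  refine ⟨taylorCoeff_one a, taylorCoeff_add a, fun g h k _ => taylorCoeff_mul a g h k,
    (dense_range_truncTaylor_intCast a (n + 1)).mono ?_⟩
  rintro _ ⟨b, rfl⟩
  exact ⟨Polynomial.ofFn (n + 1) b, (truncTaylor_intCast a b).symm⟩

/-- For `K` algebraically closed of characteristic `0`, `n ≥ 1` and
`a ∈ K`, the truncated Taylor expansion map `ℤ[X] → B = K[ω]` (`ω^{n+1} = 0`),
`g ↦ Σ_{k≤n} (g⁽ᵏ⁾(a)/k!) ωᵏ`, is a ring homomorphism (for the truncated-polynomial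
multiplication) with Zariski-dense image in `B`, viewed as affine `(n+1)`-space. -/
theorem truncated_taylor_ringHom_dense (K : Type*) [Field K] [IsAlgClosed K] [CharZero K]
    (n : ℕ) (hn : 1 ≤ n) (a : K) :
    (∀ k : ℕ, taylorCoeff K a 1 k = if k = 0 then 1 else 0) ∧
    (∀ g h : Polynomial ℤ, ∀ k : ℕ,
      taylorCoeff K a (g + h) k = taylorCoeff K a g k + taylorCoeff K a h k) ∧
    (∀ g h : Polynomial ℤ, ∀ k : ℕ, k ≤ n →
      taylorCoeff K a (g * h) k =
        ∑ ij ∈ Finset.HasAntidiagonal.antidiagonal k, taylorCoeff K a g ij.1 * taylorCoeff K a h ij.2) ∧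
    @Dense _ (zariskiTop K (n + 1))
      (Set.range fun g : Polynomial ℤ => fun k : Fin (n + 1) => taylorCoeff K a g k) :=
  truncated_taylor_ringHom_dense_general K n a
end
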